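/- For all positive integers r and m, there exists a positive integer n such that for every coloring of the vertex set {0,1}ⁿ ⊂ ℝⁿ of the n-dimensional unit hypercube with at most r colors (i.e., every function χ : {0,1}ⁿ → Fin r), there exists a monochromatic isometric copy of {0, √2}^m (the vertex set of an m-dimensional hypercube of sidelength √2) inside {0,1}ⁿ. -/

import Mathlib

/-- The vertex set `{0, s}^m ⊂ ℝ^m` of an `m`-dimensional hypercube of sidelength `s`. -/
def cubeVertices (m : ℕ) (s : ℝ) : Set (EuclideanSpace ℝ (Fin m)) :=
  {x | ∀ i, x i = 0 ∨ x i = s}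

/-!
Identify `{0, s}^m` with `Bool^m`; Euclidean distance is then `|s|` times the square root of
Hamming distance, so a copy of `{0, √2}^m` in `{0, 1}^n` is a map `Bool^m → Bool^n` that doubles
Hamming distances. Such maps with monochromatic image are built by induction on `m`: colour
`Bool^n` by the vector of colours of `(u, e_j)`, `j < N`, where `e_j` is the `j`-th unit vector of
`Bool^N` and `N` exceeds the number of colours. A monochromatic doubling copy of `Bool^m` for this
colouring, together with two indices `j ≠ j'` on which the common colour vector agrees
(pigeonhole), yields one of `Bool^(m+1)`: send the last coordinate to `e_j` or `e_j'`, which are at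
Hamming distance 2.
-/

open Finset

section Hamming

variable {β : Type*} [DecidableEq β]

theorem hammingDist_eq_sum {ι : Type*} [Fintype ι] (x y : ι → β) :
    hammingDist x y = ∑ i, if x i ≠ y i then 1 else 0 :=
  card_filter _ _

theorem hammingDist_append {a b : ℕ} (u u' : Fin a → β) (v v' : Fin b → β) :
    hammingDist (Fin.append u v) (Fin.append u' v') = hammingDist u u' + hammingDist v v' := by
  simp_rw [hammingDist_eq_sum, Fin.sum_univ_add, Fin.append_left, Fin.append_right]

theorem hammingDist_eq_hammingDist_init_add {m : ℕ} (x y : Fin (m + 1) → β) :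
    hammingDist x y = hammingDist (Fin.init x) (Fin.init y) +
      if x (Fin.last m) ≠ y (Fin.last m) then 1 else 0 := by
  rw [hammingDist_eq_sum, hammingDist_eq_sum, Fin.sum_univ_castSucc]
  rfl

end Hamming

def unitVec {N : ℕ} (j : Fin N) : Fin N → Bool := fun t => decide (t = j)

theorem hammingDist_unitVec {N : ℕ} {j j' : Fin N} (h : j ≠ j') :
    hammingDist (unitVec j) (unitVec j') = 2 := by
  have hsupp : ({i | unitVec j i ≠ unitVec j' i} : Finset (Fin N)) = {j, j'} := by
    ext t
    by_cases h1 : t = j <;> by_cases h2 : t = j' <;> simp_all [unitVec]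
  rw [hammingDist, hsupp, card_pair h]

theorem hammingDist_unitVec_cond {N : ℕ} {j j' : Fin N} (h : j ≠ j') (a b : Bool) :
    hammingDist (unitVec (cond a j j')) (unitVec (cond b j j')) =
      2 * if a ≠ b then 1 else 0 := by
  cases a <;> cases b <;> simp [hammingDist_unitVec h, hammingDist_unitVec h.symm]

def HasMonochromaticDoubling (m n : ℕ) (κ : Type*) : Prop :=
  ∀ χ : (Fin n → Bool) → κ, ∃ g : (Fin m → Bool) → Fin n → Bool,
    (∀ x y, hammingDist (g x) (g y) = 2 * hammingDist x y) ∧ ∀ x y, χ (g x) = χ (g y)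

theorem hasMonochromaticDoubling_zero_one (κ : Type*) : HasMonochromaticDoubling 0 1 κ :=
  fun _ => ⟨fun _ _ => false, fun x y => by simp [Subsingleton.elim x y], fun _ _ => rfl⟩

theorem HasMonochromaticDoubling.succ {m n N : ℕ} {κ : Type*} [Fintype κ]
    (hN : Fintype.card κ < N) (h : HasMonochromaticDoubling m n (Fin N → κ)) :
    HasMonochromaticDoubling (m + 1) (n + N) κ := by
  intro χ
  obtain ⟨g₀, hg₀, hmono⟩ := h fun u j => χ (Fin.append u (unitVec j))
  set base : Fin n → Bool := g₀ fun _ => false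
  obtain ⟨j, j', hjj', hcol⟩ :=
    Fintype.exists_ne_map_eq_of_card_lt (fun j => χ (Fin.append base (unitVec j))) (by simpa)
  refine ⟨fun x => Fin.append (g₀ (Fin.init x)) (unitVec (cond (x (Fin.last m)) j j')),
    fun x y => ?_, ?_⟩
  · rw [hammingDist_append, hg₀, hammingDist_unitVec_cond hjj',
      hammingDist_eq_hammingDist_init_add x y]
    ring
  · suffices hconst : ∀ x : Fin (m + 1) → Bool,
        χ (Fin.append (g₀ (Fin.init x)) (unitVec (cond (x (Fin.last m)) j j'))) =
          χ (Fin.append base (unitVec j)) by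
      intro x y
      rw [hconst, hconst]
    intro x
    rw [congrFun (hmono (Fin.init x) fun _ => false) (cond (x (Fin.last m)) j j')]
    cases x (Fin.last m)
    exacts [hcol.symm, rfl]

theorem exists_hasMonochromaticDoubling (m : ℕ) (κ : Type*) [Fintype κ] :
    ∃ n, 0 < n ∧ HasMonochromaticDoubling m n κ := by
  induction m generalizing κ with
  | zero => exact ⟨1, one_pos, hasMonochromaticDoubling_zero_one κ⟩
  | succ m ih =>
    obtain ⟨n, -, h⟩ := ih (Fin (Fintype.card κ + 1) → κ)
    exact ⟨n + (Fintype.card κ + 1), by omega, h.succ (Nat.lt_succ_self _)⟩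

section CubePoint

variable {n : ℕ} {s : ℝ}

noncomputable def cubePoint (s : ℝ) (u : Fin n → Bool) : EuclideanSpace ℝ (Fin n) :=
  WithLp.toLp 2 fun i => if u i then s else 0

noncomputable def cubeCoords (x : EuclideanSpace ℝ (Fin n)) : Fin n → Bool :=
  fun i => decide (x i ≠ 0)

theorem cubePoint_mem_cubeVertices (u : Fin n → Bool) : cubePoint s u ∈ cubeVertices n s := by
  intro i
  cases hu : u i <;> simp [cubePoint, hu]

theorem cubePoint_cubeCoords {x : EuclideanSpace ℝ (Fin n)} (hx : x ∈ cubeVertices n s) :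
    cubePoint s (cubeCoords x) = x := by
  ext i
  rcases hx i with h | h <;> by_cases hs : s = 0 <;> simp [cubePoint, cubeCoords, h, hs]

theorem dist_cubePoint (u v : Fin n → Bool) :
    dist (cubePoint s u) (cubePoint s v) = |s| * √(hammingDist u v) := by
  have hsum : ∑ i, dist (cubePoint s u i) (cubePoint s v i) ^ 2 = s ^ 2 * hammingDist u v := by
    rw [hammingDist_eq_sum]
    push_cast
    rw [mul_sum]
    refine sum_congr rfl fun i _ => ?_
    cases hu : u i <;> cases hv : v i <;> simp [cubePoint, Real.dist_eq, hu, hv]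
  rw [EuclideanSpace.dist_eq, hsum, Real.sqrt_mul' _ (Nat.cast_nonneg _), Real.sqrt_sq_eq_abs]

theorem dist_eq_of_mem_cubeVertices {x y : EuclideanSpace ℝ (Fin n)}
    (hx : x ∈ cubeVertices n s) (hy : y ∈ cubeVertices n s) :
    dist x y = |s| * √(hammingDist (cubeCoords x) (cubeCoords y)) := by
  rw [← dist_cubePoint, cubePoint_cubeCoords hx, cubePoint_cubeCoords hy]

end CubePoint

theorem mono_cube_r_colorings_general (r m : ℕ) :
    ∃ n : ℕ, 0 < n ∧
      ∀ χ : EuclideanSpace ℝ (Fin n) → Fin r,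
        ∃ f : EuclideanSpace ℝ (Fin m) → EuclideanSpace ℝ (Fin n),
          Set.InjOn f (cubeVertices m (Real.sqrt 2)) ∧
          (∀ x ∈ cubeVertices m (Real.sqrt 2), f x ∈ cubeVertices n 1) ∧
          (∀ x ∈ cubeVertices m (Real.sqrt 2), ∀ y ∈ cubeVertices m (Real.sqrt 2),
            dist (f x) (f y) = dist x y) ∧
          (∀ x ∈ cubeVertices m (Real.sqrt 2), ∀ y ∈ cubeVertices m (Real.sqrt 2),
            χ (f x) = χ (f y)) := by
  obtain ⟨n, hn, H⟩ := exists_hasMonochromaticDoubling m (Fin r)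
  refine ⟨n, hn, fun χ => ?_⟩
  obtain ⟨g, hg, hmono⟩ := H (χ ∘ cubePoint 1)
  have hdist : ∀ x ∈ cubeVertices m √2, ∀ y ∈ cubeVertices m √2,
      dist (cubePoint 1 (g (cubeCoords x))) (cubePoint 1 (g (cubeCoords y))) = dist x y := by
    intro x hx y hy
    rw [dist_cubePoint, hg, dist_eq_of_mem_cubeVertices hx hy, Nat.cast_mul, Nat.cast_ofNat,
      Real.sqrt_mul zero_le_two, abs_one, abs_of_nonneg (Real.sqrt_nonneg 2), one_mul]
  refine ⟨fun x => cubePoint 1 (g (cubeCoords x)), fun x hx y hy hxy => ?_,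
    fun x _ => cubePoint_mem_cubeVertices _, hdist, fun x _ y _ => hmono _ _⟩
  rw [← dist_eq_zero, ← hdist x hx y hy]
  exact dist_eq_zero.mpr hxy

/-- For all positive `r, m` there exists `n` such that every `r`-coloring of the vertex
set `{0,1}ⁿ` of the unit hypercube contains a monochromatic isometric copy of
`{0, √2}^m`. -/
theorem mono_cube_r_colorings (r m : ℕ) (hr : 0 < r) (hm : 0 < m) :
    ∃ n : ℕ, 0 < n ∧
      ∀ χ : EuclideanSpace ℝ (Fin n) → Fin r,
        ∃ f : EuclideanSpace ℝ (Fin m) → EuclideanSpace ℝ (Fin n),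
          Set.InjOn f (cubeVertices m (Real.sqrt 2)) ∧
          (∀ x ∈ cubeVertices m (Real.sqrt 2), f x ∈ cubeVertices n 1) ∧
          (∀ x ∈ cubeVertices m (Real.sqrt 2), ∀ y ∈ cubeVertices m (Real.sqrt 2),
            dist (f x) (f y) = dist x y) ∧
          (∀ x ∈ cubeVertices m (Real.sqrt 2), ∀ y ∈ cubeVertices m (Real.sqrt 2),
            χ (f x) = χ (f y)) :=
  mono_cube_r_colorings_general r m
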